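/- arXiv:2511.05746 — 5 statements merged into one kernel-verified Lean document; each statement's English description precedes it below -/
import Mathlib

section
/- Let $s_1, \dots, s_N, s$ be exchangeable real-valued random variables and define $\hat p = (|\{i : s \ge s_i\}| + 1)/(N+1)$. Then for every $\lambda \in [0,1]$, $\mathbb{P}[\hat p \le \lambda] \le \lambda$, i.e., $\hat p$ is super-uniform. -/
/-!
Among any scores, at most `k` of them have rank at most `k`: the largest of those scores
already has rank at least their number. Exchangeability makes the events
`{rank of the j-th score ≤ k}` equiprobable, so `(N + 1) · P[rank of s ≤ k] ≤ k`, and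
`p̂ ≤ λ` means exactly that the rank of `s` is at most `⌊λ (N + 1)⌋`.
-/

open MeasureTheory Finset

namespace Conformal

variable {ι α : Type*}

theorem measurable_comp_perm [MeasurableSpace α] (σ : Equiv.Perm ι) :
    Measurable fun x : ι → α => x ∘ σ :=
  measurable_pi_lambda _ fun i => measurable_pi_apply (σ i)

variable [Fintype ι] [LinearOrder α]

/-- The conformal p-value of the score `x j` is `rank x j / card ι`. -/
def rank (x : ι → α) (j : ι) : ℕ := #{i | x i ≤ x j}

theorem card_rank_le_le (x : ι → α) (k : ℕ) : #{j | rank x j ≤ k} ≤ k := by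
  obtain h | ⟨j, hj, hmax⟩ :=
    (filter (fun j => rank x j ≤ k) univ).eq_empty_or_nonempty.imp_right (exists_max_image _ x)
  · simp [h]
  · exact (card_le_card fun i hi => by simpa [rank] using hmax i hi).trans (mem_filter.1 hj).2

theorem rank_comp_perm (x : ι → α) (σ : Equiv.Perm ι) (j : ι) :
    rank (x ∘ σ) j = rank x (σ j) :=
  card_equiv σ (by simp)

theorem rank_last {N : ℕ} (x : Fin (N + 1) → α) :
    rank x (Fin.last N) = #{i : Fin N | x i.castSucc ≤ x (Fin.last N)} + 1 := by
  simp only [rank, card_filter, Fin.sum_univ_castSucc, le_refl, if_true]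

variable [TopologicalSpace α] [MeasurableSpace α] [OpensMeasurableSpace α]
  [OrderClosedTopology α] [SecondCountableTopology α]

theorem measurable_rank (j : ι) : Measurable fun x : ι → α => rank x j := by
  simp_rw [rank, card_filter]
  exact Finset.measurable_sum _ fun i _ =>
    Measurable.ite (measurableSet_le (measurable_pi_apply i) (measurable_pi_apply j))
      measurable_const measurable_const

theorem measurableSet_rank_le (j : ι) (k : ℕ) : MeasurableSet {x : ι → α | rank x j ≤ k} :=
  measurable_rank j measurableSet_Iic

theorem sum_measure_rank_le_le (μ : Measure (ι → α)) (k : ℕ) :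
    ∑ j, μ {x | rank x j ≤ k} ≤ k * μ Set.univ := by
  calc ∑ j, μ {x | rank x j ≤ k}
      = ∫⁻ x, ∑ j, {x | rank x j ≤ k}.indicator 1 x ∂μ := by
        rw [lintegral_finsetSum _ fun j _ => measurable_one.indicator (measurableSet_rank_le j k)]
        simp_rw [lintegral_indicator_one (measurableSet_rank_le _ k)]
    _ ≤ ∫⁻ _, (k : ENNReal) ∂μ := lintegral_mono fun x => by
        have hcard : ∑ j, {x : ι → α | rank x j ≤ k}.indicator 1 x =
            (#{j | rank x j ≤ k} : ENNReal) := by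
          rw [card_filter, Nat.cast_sum]
          exact sum_congr rfl fun j _ => by by_cases h : rank x j ≤ k <;> simp [h]
        exact hcard ▸ Nat.cast_le.2 (card_rank_le_le x k)
    _ = k * μ Set.univ := lintegral_const _

theorem measure_rank_le_eq_of_map_comp_perm {μ : Measure (ι → α)}
    (hμ : ∀ σ : Equiv.Perm ι, μ.map (fun x => x ∘ σ) = μ) (i j : ι) (k : ℕ) :
    μ {x | rank x i ≤ k} = μ {x | rank x j ≤ k} := by
  classical
  calc μ {x | rank x i ≤ k} = μ.map (fun x => x ∘ Equiv.swap i j) {x | rank x i ≤ k} := by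
        rw [hμ]
    _ = μ {x | rank x j ≤ k} := by
        rw [Measure.map_apply (measurable_comp_perm _) (measurableSet_rank_le i k)]
        simp only [Set.preimage_ofPred_eq, rank_comp_perm, Equiv.swap_apply_left]

theorem card_mul_measure_rank_le_le {μ : Measure (ι → α)} [IsProbabilityMeasure μ]
    (hμ : ∀ σ : Equiv.Perm ι, μ.map (fun x => x ∘ σ) = μ) (j : ι) (k : ℕ) :
    Fintype.card ι * μ {x | rank x j ≤ k} ≤ k := by
  simpa [measure_rank_le_eq_of_map_comp_perm hμ _ j] using sum_measure_rank_le_le μ k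

end Conformal

theorem ENNReal.natCast_floor_le_ofReal (a : ℝ) :
    (⌊a⌋₊ : ENNReal) ≤ ENNReal.ofReal a := by
  rcases eq_or_ne ⌊a⌋₊ 0 with h | h
  · simp [h]
  · exact (ENNReal.natCast_le_ofReal h).2
      (Nat.floor_le (Nat.pos_of_floor_pos (Nat.pos_of_ne_zero h)).le)

theorem ENNReal.natCast_floor_mul_div_le_ofReal (a : ℝ) (n : ℕ) :
    (⌊a * n⌋₊ : ENNReal) / n ≤ ENNReal.ofReal a := by
  rw [ENNReal.div_le_iff_le_mul (Or.inr ENNReal.ofReal_ne_top) (Or.inl (ENNReal.natCast_ne_top n)),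
    ← ENNReal.ofReal_natCast n, ← ENNReal.ofReal_mul' n.cast_nonneg]
  exact ENNReal.natCast_floor_le_ofReal _

open Conformal

theorem conformal_pvalue_superuniform_general {Ω : Type*} [MeasurableSpace Ω]
    (P : Measure Ω) [IsProbabilityMeasure P] (N : ℕ)
    (X : Ω → Fin (N + 1) → ℝ) (hX : Measurable X)
    (hexch : ∀ σ : Equiv.Perm (Fin (N + 1)),
      Measure.map (fun ω => X ω ∘ σ) P = Measure.map X P)
    (lam : ℝ) :
    P {ω | ((Nat.card {i : Fin N | X ω i.castSucc ≤ X ω (Fin.last N)} : ℝ) + 1) / (N + 1)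
        ≤ lam} ≤ ENNReal.ofReal lam := by
  set k := ⌊lam * ↑(N + 1)⌋₊
  have hevent : {ω | ((Nat.card {i : Fin N | X ω i.castSucc ≤ X ω (Fin.last N)} : ℝ) + 1)
      / (N + 1) ≤ lam} = X ⁻¹' {x | rank x (Fin.last N) ≤ k} := by
    ext ω
    rw [Set.mem_preimage, Set.mem_ofPred_eq, Set.mem_ofPred_eq, rank_last,
      Nat.le_floor_iff' (Nat.succ_ne_zero _), div_le_iff₀ (by positivity),
      Nat.card_eq_fintype_card, Fintype.card_subtype]
    push_cast
    rfl
  have hinv : ∀ σ : Equiv.Perm (Fin (N + 1)), (P.map X).map (fun x => x ∘ σ) = P.map X :=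
    fun σ => (Measure.map_map (measurable_comp_perm σ) hX).trans (hexch σ)
  have := Measure.isProbabilityMeasure_map (μ := P) hX.aemeasurable
  have hbound := card_mul_measure_rank_le_le hinv (Fin.last N) k
  rw [Fintype.card_fin] at hbound
  rw [hevent, ← Measure.map_apply hX (measurableSet_rank_le _ k)]
  calc _ ≤ (k : ENNReal) / ↑(N + 1) :=
        (ENNReal.le_div_iff_mul_le (Or.inl (by simp)) (Or.inl (by simp))).2 (by rwa [mul_comm])
    _ ≤ ENNReal.ofReal lam := ENNReal.natCast_floor_mul_div_le_ofReal lam (N + 1)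

/-- Super-uniformity of the conformal p-value: if `(s₁, …, s_N, s)` (encoded as the
coordinates of the random vector `X`, with `s = X (Fin.last N)`) are exchangeable real
random variables, then `p̂ = (|{i : s ≥ sᵢ}| + 1)/(N+1)` satisfies `P[p̂ ≤ λ] ≤ λ`
for every `λ ∈ [0,1]`. -/
theorem conformal_pvalue_superuniform {Ω : Type*} [MeasurableSpace Ω]
    (P : Measure Ω) [IsProbabilityMeasure P] (N : ℕ)
    (X : Ω → Fin (N + 1) → ℝ) (hX : Measurable X)
    (hexch : ∀ σ : Equiv.Perm (Fin (N + 1)),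
      Measure.map (fun ω => X ω ∘ σ) P = Measure.map X P)
    (lam : ℝ) (hlam : lam ∈ Set.Icc (0 : ℝ) 1) :
    P {ω | ((Nat.card {i : Fin N | X ω i.castSucc ≤ X ω (Fin.last N)} : ℝ) + 1) / (N + 1)
        ≤ lam} ≤ ENNReal.ofReal lam :=
  conformal_pvalue_superuniform_general P N X hX hexch lam
end

section
/- Let $s_1, \dots, s_N$ be i.i.d. real random variables with common cdf $F$, let $\alpha \in (0,1)$, set $k = \lceil \alpha(N+1) - 1 \rceil$, let $s_{(k)}$ denote the $k$-th order statistic, and let $\hat F_N$ denote the empirical cdf. Then for any $\delta \in (0,1)$, with probability at least $1 - \delta$, $|\alpha - F(s_{(k)}^-)| \le \max(\alpha, 1-\alpha)/N + |k/N - \hat F_N(s_{(k)}^-)| + \sqrt{\ln(2/\delta)/(2N)}$, where $F(s^-)$ denotes the left limit of $F$ at $s$. -/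
/-!
Write `G(x) = ν(Iio x)` for the left limit `F(x⁻)` and `m` for the number of sample points
strictly below `s_(k)`, so that `m < k ≤ #{i | sᵢ ≤ s_(k)}`. Since `|α - k/N| ≤ max(α, 1-α)/N` by
the choice of `k`, the triangle inequality reduces the claim to the one-sided bounds
`G(s_(k)) ≤ k/N + ε` and `m/N ≤ G(s_(k)) + ε`. Each of them can fail only if the empirical count of
a *fixed* half-line, cut at a quantile of `ν`, deviates from its mean by `Nε`; this trades the
random threshold `s_(k)` for a deterministic one, and Hoeffding's inequality bounds each of the two
events by `exp(-2Nε²) = δ/2`.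
-/

open MeasureTheory

/-- The `k`-th smallest value (counted with multiplicity) of `ω : Fin N → ℝ`. -/
noncomputable def orderStat {N : ℕ} (ω : Fin N → ℝ) (k : ℕ) : ℝ :=
  sInf {x : ℝ | k ≤ Nat.card {i : Fin N // ω i ≤ x}}

open ProbabilityTheory Set Real Filter Topology

variable {α ι : Type*}

noncomputable def sampleCount (S : Set α) (ω : ι → α) : ℕ := Nat.card {i // ω i ∈ S}

lemma sampleCount_eq_sum_indicator [Fintype ι] (S : Set α) (ω : ι → α) :
    (sampleCount S ω : ℝ) = ∑ i, S.indicator 1 (ω i) := by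
  classical
  rw [sampleCount, Nat.card_eq_fintype_card, Fintype.card_subtype, Finset.natCast_card_filter]
  simp [indicator_apply]

lemma sampleCount_mono [Finite ι] {S T : Set α} (h : S ⊆ T) (ω : ι → α) :
    sampleCount S ω ≤ sampleCount T ω :=
  Nat.card_le_card_of_injective (fun i => ⟨i.1, h i.2⟩) fun _ _ hij =>
    Subtype.ext (congrArg Subtype.val hij :)

lemma sampleCount_eq_card [Finite ι] {S : Set α} {ω : ι → α} (h : ∀ i, ω i ∈ S) :
    sampleCount S ω = Nat.card ι :=
  Nat.card_congr (Equiv.subtypeUnivEquiv h)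

lemma upperSemicontinuous_sampleCount_Iic [Fintype ι] (ω : ι → ℝ) :
    UpperSemicontinuous fun x => (sampleCount (Iic x) ω : ℝ) := by
  have h : ∀ x i, (Iic x).indicator (1 : ℝ → ℝ) (ω i) = (Ici (ω i)).indicator 1 x := by
    simp [indicator_apply]
  simp only [sampleCount_eq_sum_indicator, h]
  exact upperSemicontinuous_sum fun i _ => isClosed_Ici.upperSemicontinuous_indicator zero_le_one

lemma lowerSemicontinuous_sampleCount_Iio [Fintype ι] (ω : ι → ℝ) :
    LowerSemicontinuous fun x => (sampleCount (Iio x) ω : ℝ) := by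
  have h : ∀ x i, (Iio x).indicator (1 : ℝ → ℝ) (ω i) = (Ioi (ω i)).indicator 1 x := by
    simp [indicator_apply]
  simp only [sampleCount_eq_sum_indicator, h]
  exact lowerSemicontinuous_sum fun i _ => isOpen_Ioi.lowerSemicontinuous_indicator zero_le_one

lemma isClosed_setOf_le_sampleCount_Iic [Fintype ι] (ω : ι → ℝ) (k : ℕ) :
    IsClosed {x : ℝ | k ≤ sampleCount (Iic x) ω} := by
  convert (upperSemicontinuous_sampleCount_Iic ω).isClosed_preimage (k : ℝ) using 1
  ext x
  simp

lemma isOpen_setOf_le_sampleCount_Iio [Fintype ι] (ω : ι → ℝ) (k : ℕ) :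
    IsOpen {x : ℝ | k ≤ sampleCount (Iio x) ω} := by
  convert (lowerSemicontinuous_sampleCount_Iio ω).isOpen_preimage ((k : ℝ) - 1) using 1
  ext x
  simp only [mem_ofPred_eq, mem_preimage, mem_Ioi, sub_lt_iff_lt_add]
  norm_cast
  exact Nat.lt_succ_iff.symm

section Hoeffding

variable [Fintype ι] [MeasurableSpace α] {ν : Measure α} [IsProbabilityMeasure ν] {ε : ℝ}

theorem measureReal_pi_mul_le_sum_sub_integral_le {f : α → ℝ} {a b : ℝ} (hf : Measurable f)
    (hab : ∀ x, f x ∈ Icc a b) (hε : 0 ≤ ε) :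
    (Measure.pi fun _ : ι => ν).real
        {ω | Fintype.card ι * ε ≤ ∑ i, (f (ω i) - ∫ x, f x ∂ν)}
      ≤ exp (-2 * Fintype.card ι * ε ^ 2 / (b - a) ^ 2) := by
  have hindep := iIndepFun_pi (μ := fun _ : ι => ν) (X := fun _ x => f x - ∫ x, f x ∂ν)
    fun _ => (hf.sub_const _).aemeasurable
  have hsub : ∀ i ∈ (Finset.univ : Finset ι),
      HasSubgaussianMGF (fun ω : ι → α => f (ω i) - ∫ x, f x ∂ν) ((‖b - a‖₊ / 2) ^ 2)
        (Measure.pi fun _ : ι => ν) := fun i _ =>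
    HasSubgaussianMGF.of_map (measurable_pi_apply i).aemeasurable <| by
      rw [(measurePreserving_eval (fun _ : ι => ν) i).map_eq]
      exact hasSubgaussianMGF_of_mem_Icc hf.aemeasurable (ae_of_all _ hab)
  refine (HasSubgaussianMGF.measure_sum_ge_le_of_iIndepFun hindep hsub
    (mul_nonneg (Nat.cast_nonneg _) hε)).trans_eq ?_
  congr 1
  simp only [Finset.sum_const, Finset.card_univ, nsmul_eq_mul, NNReal.coe_mul, NNReal.coe_natCast,
    NNReal.coe_pow, NNReal.coe_div, coe_nnnorm, Real.norm_eq_abs, NNReal.coe_ofNat]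
  rw [div_pow, sq_abs]
  rcases eq_or_ne (Fintype.card ι : ℝ) 0 with h | h
  · simp [h]
  · field_simp

lemma measureReal_pi_le_sampleCount_le {S : Set α} (hS : MeasurableSet S) (hε : 0 ≤ ε) :
    (Measure.pi fun _ : ι => ν).real
        {ω | Fintype.card ι * (ν.real S + ε) ≤ sampleCount S ω}
      ≤ exp (-2 * Fintype.card ι * ε ^ 2) := by
  have h := measureReal_pi_mul_le_sum_sub_integral_le (ι := ι) (ν := ν) (f := S.indicator 1)
    (a := 0) (b := 1) (measurable_const.indicator hS) (fun x => ?_) hε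
  · rw [sub_zero, one_pow, div_one] at h
    refine le_trans (measureReal_mono fun ω hω => ?_) h
    simp only [mem_ofPred_eq, integral_indicator_one hS, Finset.sum_sub_distrib, Finset.sum_const,
      Finset.card_univ, nsmul_eq_mul, ← sampleCount_eq_sum_indicator] at hω ⊢
    linarith
  · by_cases hx : x ∈ S <;> simp [hx]

lemma measureReal_pi_sampleCount_le_le {S : Set α} (hS : MeasurableSet S) (hε : 0 ≤ ε) :
    (Measure.pi fun _ : ι => ν).real
        {ω | (sampleCount S ω : ℝ) ≤ Fintype.card ι * (ν.real S - ε)}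
      ≤ exp (-2 * Fintype.card ι * ε ^ 2) := by
  have h := measureReal_pi_mul_le_sum_sub_integral_le (ι := ι) (ν := ν) (f := -S.indicator 1)
    (a := -1) (b := 0) (measurable_const.indicator hS).neg (fun x => ?_) hε
  · rw [zero_sub, neg_neg, one_pow, div_one] at h
    refine le_trans (measureReal_mono fun ω hω => ?_) h
    simp only [mem_ofPred_eq, Pi.neg_apply, integral_neg, integral_indicator_one hS,
      Finset.sum_sub_distrib, Finset.sum_neg_distrib, Finset.sum_const,
      Finset.card_univ, nsmul_eq_mul, ← sampleCount_eq_sum_indicator] at hω ⊢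
    linarith
  · by_cases hx : x ∈ S <;> simp [hx]

end Hoeffding

section Quantile

variable {ν : Measure ℝ} [IsProbabilityMeasure ν]

lemma measureReal_Iio_le_of_forall_lt {b c : ℝ} (h : ∀ x < b, ν.real (Iio x) ≤ c) :
    ν.real (Iio b) ≤ c := by
  obtain ⟨u, hu_mono, hu_lt, hu_lim⟩ := exists_seq_strictMono_tendsto b
  have hIio : ⋃ n, Iio (u n) = Iio b :=
    (isLUB_of_tendsto_atTop hu_mono.monotone hu_lim).iUnion_Iio_eq
  have hlim := (ENNReal.tendsto_toReal (measure_ne_top ν (Iio b))).comp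
    (hIio ▸ tendsto_measure_iUnion_atTop fun m n hmn => Iio_subset_Iio (hu_mono.monotone hmn))
  exact le_of_tendsto' hlim fun n => h _ (hu_lt n)

lemma le_measureReal_Iic_of_forall_gt {b c : ℝ} (h : ∀ y > b, c ≤ ν.real (Iic y)) :
    c ≤ ν.real (Iic b) := by
  rw [← cdf_eq_real]
  refine ge_of_tendsto (((cdf ν).right_continuous b).mono Ioi_subset_Ici_self)
    (eventually_nhdsWithin_of_forall fun y hy => ?_)
  rw [cdf_eq_real]
  exact h y hy

lemma bddAbove_setOf_measureReal_Iio_le {τ : ℝ} (hτ : τ < 1) :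
    BddAbove {x | ν.real (Iio x) ≤ τ} := by
  obtain ⟨x₀, hx₀⟩ := ((tendsto_cdf_atTop (μ := ν)).eventually (lt_mem_nhds hτ)).exists
  refine ⟨x₀, fun x hx => le_of_not_gt fun hlt => ?_⟩
  have : ν.real (Iic x₀) ≤ ν.real (Iio x) := measureReal_mono (Iic_subset_Iio.2 hlt)
  rw [← cdf_eq_real] at this
  exact (hx₀.trans_le this).not_ge hx

lemma nonempty_setOf_measureReal_Iio_lt {θ : ℝ} (hθ : 0 < θ) :
    {x | ν.real (Iio x) < θ}.Nonempty := by
  obtain ⟨x₀, hx₀⟩ := ((tendsto_cdf_atBot (μ := ν)).eventually (gt_mem_nhds hθ)).exists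
  exact ⟨x₀, (measureReal_mono Iio_subset_Iic_self).trans_lt ((cdf_eq_real ν x₀) ▸ hx₀)⟩

lemma exists_measureReal_Iio_le_and_le_of_measureReal_Iio_lt {θ : ℝ} (hθ₀ : 0 < θ) (hθ₁ : θ < 1) :
    ∃ b, ν.real (Iio b) ≤ θ ∧ ∀ s, ν.real (Iio s) < θ → s ≤ b := by
  have hne := nonempty_setOf_measureReal_Iio_lt (ν := ν) hθ₀
  have hbdd := (bddAbove_setOf_measureReal_Iio_le (ν := ν) hθ₁).mono fun x (hx : _ < θ) => hx.le
  refine ⟨sSup {x | ν.real (Iio x) < θ}, measureReal_Iio_le_of_forall_lt fun x hx => ?_,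
    fun s hs => le_csSup hbdd hs⟩
  obtain ⟨s, hs, hxs⟩ := exists_lt_of_lt_csSup hne hx
  exact (measureReal_mono (Iio_subset_Iio hxs.le)).trans hs.le

lemma exists_le_measureReal_Iic_and_lt_of_lt_measureReal_Iio {τ : ℝ} (hτ₀ : 0 < τ) (hτ₁ : τ < 1) :
    ∃ b, τ ≤ ν.real (Iic b) ∧ ∀ s, τ < ν.real (Iio s) → b < s := by
  have hne := (nonempty_setOf_measureReal_Iio_lt (ν := ν) hτ₀).mono fun x (hx : _ < τ) => hx.le
  have hbdd := bddAbove_setOf_measureReal_Iio_le (ν := ν) hτ₁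
  set b := sSup {x | ν.real (Iio x) ≤ τ}
  have hb : ν.real (Iio b) ≤ τ := measureReal_Iio_le_of_forall_lt fun x hx => by
    obtain ⟨y, hy, hxy⟩ := exists_lt_of_lt_csSup hne hx
    exact (measureReal_mono (Iio_subset_Iio hxy.le)).trans hy
  refine ⟨b, le_measureReal_Iic_of_forall_gt fun y hy => ?_, fun s hs => ?_⟩
  · have : τ < ν.real (Iio y) := lt_of_not_ge fun h => (le_csSup hbdd h).not_gt hy
    exact this.le.trans (measureReal_mono Iio_subset_Iic_self)
  · exact lt_of_not_ge fun hsb => ((measureReal_mono (Iio_subset_Iio hsb)).trans hb).not_gt hs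

end Quantile

section OrderStat

variable {N k : ℕ} {ω : Fin N → ℝ}

lemma orderStat_zero (ω : Fin N → ℝ) : orderStat ω 0 = 0 := by
  simp [orderStat]

lemma bddBelow_setOf_le_sampleCount_Iic (hk : 1 ≤ k) :
    BddBelow {x : ℝ | k ≤ sampleCount (Iic x) ω} := by
  obtain ⟨L, hL⟩ := (finite_range ω).bddBelow
  refine ⟨L, fun x hx => ?_⟩
  obtain ⟨⟨i, hi⟩⟩ := (Nat.card_pos_iff.1 (hk.trans hx)).1
  exact (hL (mem_range_self i)).trans hi

lemma nonempty_setOf_le_sampleCount_Iic (hkN : k ≤ N) :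
    {x : ℝ | k ≤ sampleCount (Iic x) ω}.Nonempty := by
  obtain ⟨M, hM⟩ := (finite_range ω).bddAbove
  refine ⟨M, ?_⟩
  rw [mem_ofPred_eq, sampleCount_eq_card (S := Iic M) fun i => hM (mem_range_self i),
    Nat.card_fin]
  exact hkN

variable (hk : 1 ≤ k) (hkN : k ≤ N)
include hk hkN

lemma orderStat_le_iff {x : ℝ} : orderStat ω k ≤ x ↔ k ≤ sampleCount (Iic x) ω := by
  have hmem : orderStat ω k ∈ {x : ℝ | k ≤ sampleCount (Iic x) ω} :=
    (isClosed_setOf_le_sampleCount_Iic ω k).csInf_mem (nonempty_setOf_le_sampleCount_Iic hkN)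
      (bddBelow_setOf_le_sampleCount_Iic hk)
  exact ⟨fun h => hmem.trans (sampleCount_mono (Iic_subset_Iic.2 h) ω),
    fun h => csInf_le (bddBelow_setOf_le_sampleCount_Iic hk) h⟩

lemma sampleCount_Iio_orderStat_lt : sampleCount (Iio (orderStat ω k)) ω < k := by
  by_contra! hle
  have hnear : ∀ᶠ y in 𝓝[<] orderStat ω k, k ≤ sampleCount (Iio y) ω :=
    nhdsWithin_le_nhds ((isOpen_setOf_le_sampleCount_Iio ω k).mem_nhds hle)
  obtain ⟨y, hy, hys⟩ := (hnear.and self_mem_nhdsWithin).exists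
  have := (orderStat_le_iff hk hkN).2 (hy.trans (sampleCount_mono Iio_subset_Iic_self ω))
  exact this.not_gt hys

end OrderStat

section Deviation

variable {ν : Measure ℝ} [IsProbabilityMeasure ν] {N k : ℕ} {ε : ℝ}

lemma measureReal_div_add_lt_measureReal_Iio_orderStat_le (hk : 1 ≤ k) (hkN : k ≤ N)
    (hε : 0 ≤ ε) :
    (Measure.pi fun _ : Fin N => ν).real {ω | (k : ℝ) / N + ε < ν.real (Iio (orderStat ω k))}
      ≤ exp (-2 * N * ε ^ 2) := by
  have hN : (0 : ℝ) < N := by exact_mod_cast hk.trans hkN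
  by_cases hτ : 1 ≤ (k : ℝ) / N + ε
  · refine (le_of_eq ?_).trans (exp_pos _).le
    convert measureReal_empty
    exact eq_empty_of_forall_notMem fun ω hω => (hτ.trans_lt hω).not_ge measureReal_le_one
  obtain ⟨b, hb, hbs⟩ :=
    exists_le_measureReal_Iic_and_lt_of_lt_measureReal_Iio (ν := ν) (by positivity) (not_le.1 hτ)
  have hH := measureReal_pi_sampleCount_le_le (ι := Fin N) (ν := ν) (S := Iic b)
    measurableSet_Iic hε
  rw [Fintype.card_fin] at hH
  refine (measureReal_mono fun ω hω => ?_).trans hH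
  rw [mem_ofPred_eq] at hω ⊢
  have hcount : sampleCount (Iic b) ω < k :=
    lt_of_not_ge fun h => ((orderStat_le_iff hk hkN).2 h).not_gt (hbs _ hω)
  have hkb : (k : ℝ) ≤ N * (ν.real (Iic b) - ε) := by
    rw [← div_le_iff₀' hN]
    linarith
  exact (Nat.cast_lt.2 hcount).le.trans hkb

lemma measureReal_measureReal_Iio_orderStat_add_lt_sampleCount_div_le (hk : 1 ≤ k)
    (hkN : k ≤ N) (hε : 0 ≤ ε) :
    (Measure.pi fun _ : Fin N => ν).real
        {ω | ν.real (Iio (orderStat ω k)) + ε < sampleCount (Iio (orderStat ω k)) ω / N}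
      ≤ exp (-2 * N * ε ^ 2) := by
  have hN : (0 : ℝ) < N := by exact_mod_cast hk.trans hkN
  have hm (ω : Fin N → ℝ) : (sampleCount (Iio (orderStat ω k)) ω : ℝ) / N ≤ (k - 1) / N := by
    gcongr
    rw [le_sub_iff_add_le]
    exact_mod_cast sampleCount_Iio_orderStat_lt hk hkN
  by_cases hθ : (k - 1 : ℝ) / N - ε ≤ 0
  · refine (le_of_eq ?_).trans (exp_pos _).le
    convert measureReal_empty
    exact eq_empty_of_forall_notMem fun ω hω => (hω.trans_le (hm ω)).not_ge
      (by linarith [measureReal_nonneg (μ := ν) (s := Iio (orderStat ω k))])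
  have hθ₁ : (k - 1 : ℝ) / N - ε < 1 := by
    have : (k - 1 : ℝ) / N < 1 := by
      rw [div_lt_one hN]
      linarith [(Nat.cast_le (α := ℝ)).2 hkN]
    linarith
  obtain ⟨b, hb, hbs⟩ :=
    exists_measureReal_Iio_le_and_le_of_measureReal_Iio_lt (ν := ν) (not_le.1 hθ) hθ₁
  have hH := measureReal_pi_le_sampleCount_le (ι := Fin N) (ν := ν) (S := Iio b)
    measurableSet_Iio hε
  rw [Fintype.card_fin] at hH
  refine (measureReal_mono fun ω hω => ?_).trans hH
  rw [mem_ofPred_eq] at hω ⊢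
  rcases (hbs (orderStat ω k) (by linarith [hm ω])).eq_or_lt with heq | hlt
  · rw [← heq, ← le_div_iff₀' hN]
    exact hω.le
  · have hkb : (k : ℝ) ≤ sampleCount (Iio b) ω := by
      exact_mod_cast ((orderStat_le_iff hk hkN).1 le_rfl).trans
        (sampleCount_mono (Iic_subset_Iio.2 hlt) ω)
    have hbk : N * (ν.real (Iio b) + ε) ≤ k - 1 := by
      rw [← le_div_iff₀' hN]
      linarith
    linarith

lemma measureReal_max_add_lt_measureReal_Iio_orderStat_le (hkN : k ≤ N) (hε : 0 ≤ ε) :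
    (Measure.pi fun _ : Fin N => ν).real
        {ω | max ((k : ℝ) / N) (sampleCount (Iio (orderStat ω k)) ω / N) + ε
          < ν.real (Iio (orderStat ω k))}
      ≤ exp (-2 * N * ε ^ 2) := by
  rcases k.eq_zero_or_pos with rfl | hk
  · -- `orderStat ω 0 = sInf univ = 0`, so the threshold is already deterministic.
    rcases N.eq_zero_or_pos with rfl | hN
    · simp
    have hH := measureReal_pi_sampleCount_le_le (ι := Fin N) (ν := ν) (S := Iio 0)
      measurableSet_Iio hε
    rw [Fintype.card_fin] at hH
    refine (measureReal_mono fun ω hω => ?_).trans hH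
    rw [mem_ofPred_eq, orderStat_zero] at hω
    rw [mem_ofPred_eq, ← div_le_iff₀' (by exact_mod_cast hN)]
    linarith [le_max_right ((0 : ℕ) / (N : ℝ)) (sampleCount (Iio (0 : ℝ)) ω / N)]
  · refine (measureReal_mono (ofPred_subset_ofPred.2 fun ω hω => ?_)).trans
      (measureReal_div_add_lt_measureReal_Iio_orderStat_le hk hkN hε)
    exact (add_le_add_left (le_max_left _ _) ε).trans_lt hω

lemma measureReal_measureReal_Iio_orderStat_add_lt_min_le (hkN : k ≤ N) (hε : 0 ≤ ε) :
    (Measure.pi fun _ : Fin N => ν).real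
        {ω | ν.real (Iio (orderStat ω k)) + ε
          < min ((k : ℝ) / N) (sampleCount (Iio (orderStat ω k)) ω / N)}
      ≤ exp (-2 * N * ε ^ 2) := by
  rcases k.eq_zero_or_pos with rfl | hk
  · refine (le_of_eq ?_).trans (exp_pos _).le
    convert measureReal_empty
    refine eq_empty_of_forall_notMem fun ω hω => ?_
    rw [mem_ofPred_eq] at hω
    refine (hω.trans_le (min_le_left _ _)).not_ge ?_
    simp [add_nonneg measureReal_nonneg hε]
  · refine (measureReal_mono (ofPred_subset_ofPred.2 fun ω hω => ?_)).trans
      (measureReal_measureReal_Iio_orderStat_add_lt_sampleCount_div_le hk hkN hε)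
    exact hω.trans_le (min_le_right _ _)

end Deviation

lemma abs_sub_le_of_le_max_add_of_min_le_add {a g p q e : ℝ} (h₁ : g ≤ max p q + e)
    (h₂ : min p q ≤ g + e) : |a - g| ≤ |a - p| + |p - q| + e := by
  rcases le_total p q with hpq | hpq
  · rw [max_eq_right hpq] at h₁
    rw [min_eq_left hpq] at h₂
    rw [abs_sub_comm p q, abs_of_nonneg (sub_nonneg.2 hpq), abs_le]
    constructor <;> linarith [neg_abs_le (a - p), le_abs_self (a - p)]
  · rw [max_eq_left hpq] at h₁
    rw [min_eq_right hpq] at h₂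
    rw [abs_of_nonneg (sub_nonneg.2 hpq), abs_le]
    constructor <;> linarith [neg_abs_le (a - p), le_abs_self (a - p)]

lemma natCeil_mul_add_one_sub_one_le {α : ℝ} (hα : α ≤ 1) (N : ℕ) :
    ⌈α * (N + 1) - 1⌉₊ ≤ N := by
  rw [Nat.ceil_le]
  nlinarith [(Nat.cast_nonneg N : (0 : ℝ) ≤ N)]

lemma abs_sub_natCeil_mul_add_one_sub_one_div_le {α : ℝ} (hα : α ∈ Ioo 0 1) {N : ℕ}
    (hN : 0 < N) : |α - ⌈α * (N + 1) - 1⌉₊ / N| ≤ max α (1 - α) / N := by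
  obtain ⟨hα₀, hα₁⟩ := hα
  have hNℝ : (0 : ℝ) < N := by exact_mod_cast hN
  have hlow : α * (N + 1) - 1 ≤ ⌈α * (N + 1) - 1⌉₊ := Nat.le_ceil _
  have hup : (⌈α * (N + 1) - 1⌉₊ : ℝ) < α * (N + 1) := by
    rcases le_or_gt (α * (N + 1) - 1) 0 with h | h
    · rw [Nat.ceil_eq_zero.2 h, Nat.cast_zero]; positivity
    · linarith [Nat.ceil_lt_add_one h.le]
  rw [show α - ⌈α * (N + 1) - 1⌉₊ / N = (α * N - ⌈α * (N + 1) - 1⌉₊) / N by field_simp,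
    abs_div, abs_of_pos hNℝ]
  gcongr
  rw [abs_le]
  constructor <;> linarith [le_max_left α (1 - α), le_max_right α (1 - α)]

lemma ofReal_one_sub_add_le_of_compl_subset_union {Ω : Type*} [MeasurableSpace Ω]
    {μ : Measure Ω} [IsProbabilityMeasure μ] {s t u : Set Ω} {a b : ℝ} (ht : μ.real t ≤ a)
    (hu : μ.real u ≤ b) (h : sᶜ ⊆ t ∪ u) : ENNReal.ofReal (1 - (a + b)) ≤ μ s := by
  rw [ENNReal.ofReal_le_iff_le_toReal (measure_ne_top μ s)]
  have hs : 1 ≤ μ.real s + μ.real sᶜ := by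
    simpa [union_compl_self] using measureReal_union_le (μ := μ) s sᶜ
  have hsc : μ.real sᶜ ≤ μ.real t + μ.real u :=
    (measureReal_mono h).trans (measureReal_union_le t u)
  change _ ≤ μ.real s
  linarith

/-- DKW-based concentration for the conformal quantile: for i.i.d. real draws from `ν`
(with cdf `F x = ν (Iic x)`), `k = ⌈α(N+1) - 1⌉` and `s_(k)` the `k`-th order statistic,
with probability at least `1 - δ`,
`|α - F(s_(k)⁻)| ≤ max(α,1-α)/N + |k/N - F̂_N(s_(k)⁻)| + √(ln(2/δ)/(2N))`,
where `F(s⁻) = ν (Iio s)` is the left limit and `F̂_N(s⁻) = |{i : sᵢ < s}|/N`. -/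
theorem conformal_quantile_concentration (ν : Measure ℝ) [IsProbabilityMeasure ν]
    (N : ℕ) (hN : 1 ≤ N) (α : ℝ) (hα : α ∈ Set.Ioo (0 : ℝ) 1)
    (δ : ℝ) (hδ : δ ∈ Set.Ioo (0 : ℝ) 1) :
    ENNReal.ofReal (1 - δ) ≤
      (Measure.pi fun _ : Fin N => ν)
        {ω | |α - (ν (Set.Iio (orderStat ω ⌈α * (N + 1) - 1⌉₊))).toReal|
          ≤ max α (1 - α) / N
            + |(⌈α * (N + 1) - 1⌉₊ : ℝ) / N
                - (Nat.card {i : Fin N // ω i < orderStat ω ⌈α * (N + 1) - 1⌉₊} : ℝ) / N|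
            + Real.sqrt (Real.log (2 / δ) / (2 * N))} := by
  obtain ⟨hδ₀, hδ₁⟩ := hδ
  set k := ⌈α * (N + 1) - 1⌉₊
  set ε := √(log (2 / δ) / (2 * N))
  have hkN : k ≤ N := natCeil_mul_add_one_sub_one_le hα.2.le N
  have hε : 0 ≤ ε := sqrt_nonneg _
  have hexp : exp (-2 * N * ε ^ 2) = δ / 2 := by
    have hlog : 0 ≤ log (2 / δ) := log_nonneg ((one_le_div hδ₀).2 (by linarith))
    have hN' : (N : ℝ) ≠ 0 := by positivity
    rw [sq_sqrt (by positivity), show -2 * N * (log (2 / δ) / (2 * N)) = -log (2 / δ) by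
      field_simp, exp_neg, exp_log (by positivity), inv_div]
  refine le_of_eq_of_le (by rw [hexp, add_halves]) (ofReal_one_sub_add_le_of_compl_subset_union
    (measureReal_max_add_lt_measureReal_Iio_orderStat_le hkN hε)
    (measureReal_measureReal_Iio_orderStat_add_lt_min_le hkN hε) fun ω hω => ?_)
  by_contra hgood
  rw [mem_union, not_or, mem_ofPred_eq, mem_ofPred_eq, not_lt, not_lt] at hgood
  exact hω ((abs_sub_le_of_le_max_add_of_min_le_add hgood.1 hgood.2).trans
    (add_le_add_left (add_le_add_left (abs_sub_natCeil_mul_add_one_sub_one_div_le hα hN) _) _))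
end

section
/- With the Variation of Information $\mathcal{D}_{VI}$ defined via block entropies as $\mathcal{D}_{VI}(\theta,\theta') = 2H(\theta \wedge \theta') - H(\theta) - H(\theta')$, where $H(\theta) = -\sum_j \frac{|B_j|}{n}\log_2 \frac{|B_j|}{n}$ and $\theta \wedge \theta'$ is the common refinement (meet) of $\theta$ and $\theta'$, the function $\mathcal{D}_{VI}$ satisfies the triangle inequality: $\mathcal{D}_{VI}(\theta, \theta'') \le \mathcal{D}_{VI}(\theta, \theta') + \mathcal{D}_{VI}(\theta', \theta'')$ for all partitions $\theta, \theta', \theta''$ of a finite set of size $n$. -/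
/-- Base-2 entropy of the block-size distribution of a partition of `Fin n`
(encoded as a setoid): `H(θ) = -∑_B (|B|/n) log₂(|B|/n)`, written equivalently as
an average over elements, each contributing `log₂` of its block's relative size. -/
noncomputable def entH {n : ℕ} (r : Setoid (Fin n)) : ℝ :=
  -(1 / (n : ℝ)) * ∑ x : Fin n, Real.logb 2 ((Nat.card {y : Fin n // r.r x y} : ℝ) / n)

/-- Variation of Information via entropies: `VI(θ, θ') = 2H(θ ⊓ θ') - H(θ) - H(θ')`,
where `θ ⊓ θ'` is the common refinement (meet). -/
noncomputable def VIent {n : ℕ} (r r' : Setoid (Fin n)) : ℝ :=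
  2 * entH (r ⊓ r') - entH r - entH r'

/-!
Writing `S(θ) = ∑ₓ log |[x]_θ|`, we have `H(θ) = log₂ n - S(θ) / (n log 2)`, so the triangle
inequality reduces to `S(θ ⊓ θ') + S(θ' ⊓ θ'') ≤ S(θ ⊓ θ'') + S(θ')`. This follows from
monotonicity `S(θ ⊓ θ' ⊓ θ'') ≤ S(θ ⊓ θ'')` and the submodularity
`S(θ ⊓ θ') + S(θ' ⊓ θ'') ≤ S(θ ⊓ θ' ⊓ θ'') + S(θ')`. For the latter, `log t ≤ t - 1` bounds the
difference by `∑ₓ (gₓ - 1)` with `gₓ = |[x]_{θθ'}| |[x]_{θ'θ''}| / (|[x]_{θθ'θ''}| |[x]_{θ'}|)`,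
and a double count shows `∑ₓ gₓ ≤ n`: after expanding `gₓ` as a sum over pairs
`(y, z) ∈ [x]_{θθ'} × [x]_{θ'θ''}`, the points `x` seen from a fixed pair lie in one block of
`θ ⊓ θ' ⊓ θ''` and contribute at most `1 / |[y]_{θ'}|`.
-/

open Finset
open scoped Classical

namespace Setoid

variable {α : Type*} [Fintype α]

noncomputable def blockFinset (r : Setoid α) (x : α) : Finset α :=
  univ.filter (r x ·)

variable {r s : Setoid α} {x y : α}

@[simp]
lemma mem_blockFinset : y ∈ r.blockFinset x ↔ r x y := by
  simp [blockFinset]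

lemma card_blockFinset_pos (r : Setoid α) (x : α) : (0 : ℝ) < #(r.blockFinset x) := by
  exact_mod_cast card_pos.mpr ⟨x, mem_blockFinset.mpr (r.refl x)⟩

lemma blockFinset_eq_of_rel (h : r x y) : r.blockFinset x = r.blockFinset y := by
  ext z
  simp only [mem_blockFinset]
  exact ⟨r.trans (r.symm h), r.trans h⟩

lemma blockFinset_mono (h : r ≤ s) (x : α) : r.blockFinset x ⊆ s.blockFinset x :=
  fun _ hy => mem_blockFinset.mpr (le_def.mp h (mem_blockFinset.mp hy))

lemma sum_inv_card_blockFinset_le_one {t : Finset α} (ht : ∀ x ∈ t, ∀ x' ∈ t, r x x') :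
    ∑ x ∈ t, (#(r.blockFinset x) : ℝ)⁻¹ ≤ 1 := by
  obtain rfl | ⟨x₀, hx₀⟩ := t.eq_empty_or_nonempty
  · simp
  have hsub : t ⊆ r.blockFinset x₀ := fun x hx => mem_blockFinset.mpr (ht x₀ hx₀ x hx)
  have hconst : ∀ x ∈ t, (#(r.blockFinset x) : ℝ)⁻¹ = (#(r.blockFinset x₀) : ℝ)⁻¹ :=
    fun x hx => by rw [blockFinset_eq_of_rel (ht x hx x₀ hx₀)]
  rw [sum_congr rfl hconst, sum_const, nsmul_eq_mul, ← div_eq_mul_inv,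
    div_le_one (r.card_blockFinset_pos x₀)]
  exact_mod_cast card_le_card hsub

lemma sum_card_inf_mul_card_inf_div_le (a b c : Setoid α) :
    ∑ x, (#((a ⊓ b).blockFinset x) * #((b ⊓ c).blockFinset x) : ℝ) /
      (#((a ⊓ b ⊓ c).blockFinset x) * #(b.blockFinset x)) ≤ Fintype.card α := by
  set w : α → ℝ := fun x => (#((a ⊓ b ⊓ c).blockFinset x) * #(b.blockFinset x) : ℝ)⁻¹
  have hpairs : ∀ x, (#((a ⊓ b).blockFinset x) * #((b ⊓ c).blockFinset x) : ℝ) /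
      (#((a ⊓ b ⊓ c).blockFinset x) * #(b.blockFinset x)) =
      ∑ _p ∈ (a ⊓ b).blockFinset x ×ˢ (b ⊓ c).blockFinset x, w x := fun x => by
    rw [sum_const, card_product, nsmul_eq_mul, div_eq_mul_inv]
    push_cast
    rfl
  have hswap : ∑ x, ∑ _p ∈ (a ⊓ b).blockFinset x ×ˢ (b ⊓ c).blockFinset x, w x =
      ∑ p ∈ univ.filter (fun p : α × α => b p.1 p.2),
        ∑ x ∈ (a ⊓ b).blockFinset p.1 ∩ (b ⊓ c).blockFinset p.2, w x := by
    refine sum_comm' fun x p => ?_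
    simp only [mem_univ, true_and, mem_product, mem_inter, mem_blockFinset, mem_filter]
    constructor
    · rintro ⟨⟨hay, hby⟩, hbz, hcz⟩
      exact ⟨⟨⟨a.symm hay, b.symm hby⟩, b.symm hbz, c.symm hcz⟩, b.trans (b.symm hby) hbz⟩
    · rintro ⟨⟨⟨hay, hby⟩, hbz, hcz⟩, -⟩
      exact ⟨⟨a.symm hay, b.symm hby⟩, b.symm hbz, c.symm hcz⟩
  have hfiber : ∀ y z, ∑ x ∈ (a ⊓ b).blockFinset y ∩ (b ⊓ c).blockFinset z, w x ≤
      (#(b.blockFinset y) : ℝ)⁻¹ := fun y z => by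
    have hw : ∀ x ∈ (a ⊓ b).blockFinset y ∩ (b ⊓ c).blockFinset z,
        w x = (#(b.blockFinset y) : ℝ)⁻¹ * (#((a ⊓ b ⊓ c).blockFinset x) : ℝ)⁻¹ := by
      intro x hx
      simp only [mem_inter, mem_blockFinset] at hx
      simp only [w, blockFinset_eq_of_rel (b.symm hx.1.2), mul_inv, mul_comm]
    rw [sum_congr rfl hw, ← mul_sum]
    refine mul_le_of_le_one_right (inv_nonneg.mpr (Nat.cast_nonneg _))
      (sum_inv_card_blockFinset_le_one fun x hx x' hx' => ?_)
    simp only [mem_inter, mem_blockFinset] at hx hx' ⊢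
    exact ⟨⟨a.trans (a.symm hx.1.1) hx'.1.1, b.trans (b.symm hx.1.2) hx'.1.2⟩,
      c.trans (c.symm hx.2.2) hx'.2.2⟩
  calc _ = ∑ x, ∑ _p ∈ (a ⊓ b).blockFinset x ×ˢ (b ⊓ c).blockFinset x, w x :=
        sum_congr rfl fun x _ => hpairs x
    _ ≤ ∑ p ∈ univ.filter (fun p : α × α => b p.1 p.2), (#(b.blockFinset p.1) : ℝ)⁻¹ :=
        hswap ▸ sum_le_sum fun p _ => hfiber p.1 p.2
    _ = ∑ y, ∑ _z ∈ b.blockFinset y, (#(b.blockFinset y) : ℝ)⁻¹ := by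
        rw [sum_filter, Fintype.sum_prod_type]
        simp only [blockFinset, sum_filter]
    _ = Fintype.card α := by simp [(b.card_blockFinset_pos _).ne']

noncomputable def logBlockSum (r : Setoid α) : ℝ :=
  ∑ x, Real.log #(r.blockFinset x)

lemma logBlockSum_mono (h : r ≤ s) : r.logBlockSum ≤ s.logBlockSum :=
  sum_le_sum fun x _ => Real.log_le_log (r.card_blockFinset_pos x)
    (by exact_mod_cast card_le_card (blockFinset_mono h x))

lemma logBlockSum_inf_add_inf_le (a b c : Setoid α) :
    (a ⊓ b).logBlockSum + (b ⊓ c).logBlockSum ≤ (a ⊓ b ⊓ c).logBlockSum + b.logBlockSum := by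
  have hpoint : ∀ x, Real.log #((a ⊓ b).blockFinset x) + Real.log #((b ⊓ c).blockFinset x) -
      (Real.log #((a ⊓ b ⊓ c).blockFinset x) + Real.log #(b.blockFinset x)) ≤
      (#((a ⊓ b).blockFinset x) * #((b ⊓ c).blockFinset x) : ℝ) /
        (#((a ⊓ b ⊓ c).blockFinset x) * #(b.blockFinset x)) - 1 := fun x => by
    have hab := card_blockFinset_pos (a ⊓ b) x
    have hbc := card_blockFinset_pos (b ⊓ c) x
    have habc := card_blockFinset_pos (a ⊓ b ⊓ c) x
    have hb := card_blockFinset_pos b x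
    rw [← Real.log_mul (by positivity) (by positivity),
      ← Real.log_mul (by positivity) (by positivity), ← Real.log_div (by positivity) (by positivity)]
    exact Real.log_le_sub_one_of_pos (by positivity)
  have hsum := sum_le_sum fun x (_ : x ∈ univ) => hpoint x
  rw [sum_sub_distrib, sum_sub_distrib, sum_add_distrib, sum_add_distrib, sum_const,
    card_univ, nsmul_one] at hsum
  unfold logBlockSum
  linarith [sum_card_inf_mul_card_inf_div_le a b c]

end Setoid

lemma entH_eq_logb_sub_logBlockSum {n : ℕ} (r : Setoid (Fin n)) :
    entH r = Real.logb 2 n - (n * Real.log 2)⁻¹ * r.logBlockSum := by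
  rcases Nat.eq_zero_or_pos n with rfl | hn
  · -- both sides are `0`, via `logb 2 0 = 0` and `0⁻¹ = 0`
    simp [entH, Setoid.logBlockSum]
  have hcard : ∀ x, (Nat.card {y : Fin n // r.r x y} : ℝ) = #(r.blockFinset x) := fun x => by
    rw [Nat.card_eq_fintype_card, Fintype.card_subtype]
    rfl
  have hn' : (n : ℝ) ≠ 0 := by positivity
  simp only [entH, Setoid.logBlockSum, hcard, Real.logb,
    Real.log_div (r.card_blockFinset_pos _).ne' hn', ← sum_div, sum_sub_distrib, sum_const,
    card_univ, Fintype.card_fin, nsmul_eq_mul]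
  field_simp
  ring

theorem VIent_triangle_general {n : ℕ} (θ θ' θ'' : Setoid (Fin n)) :
    VIent θ θ'' ≤ VIent θ θ' + VIent θ' θ'' := by
  have hmono : (θ ⊓ θ' ⊓ θ'').logBlockSum ≤ (θ ⊓ θ'').logBlockSum :=
    Setoid.logBlockSum_mono (le_inf (inf_le_left.trans inf_le_left) inf_le_right)
  have hsub := Setoid.logBlockSum_inf_add_inf_le θ θ' θ''
  have hc : 0 ≤ ((n : ℝ) * Real.log 2)⁻¹ := by positivity
  have hscaled := mul_le_mul_of_nonneg_left (hsub.trans (add_le_add_left hmono _)) hc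
  simp only [VIent, entH_eq_logb_sub_logBlockSum]
  rw [mul_add, mul_add] at hscaled
  linarith

/-- The Variation of Information satisfies the triangle inequality on the space of
partitions of an `n`-element set. -/
theorem VIent_triangle {n : ℕ} (hn : 0 < n) (θ θ' θ'' : Setoid (Fin n)) :
    VIent θ θ'' ≤ VIent θ θ' + VIent θ' θ'' :=
  VIent_triangle_general θ θ' θ''
end

section
/- Let $s_1, \dots, s_N, s$ be exchangeable real random variables whose joint distribution is almost surely tie-free (all $N+1$ values distinct). Define $\hat p = (|\{i : s \ge s_i\}| + 1)/(N+1)$. Then $\hat p$ is uniformly distributed on $\{1/(N+1), 2/(N+1), \dots, 1\}$. -/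
/-!
For a tie-free vector `v` indexed by a set of size `n`, the ranks `#{l | v l ≤ v k}` are a
bijection onto `{1, …, n}`, so for each `m` the events "coordinate `k` has rank `m`" partition
the tie-free set as `k` varies. Exchangeability makes all these events equally likely, hence each
has probability `1/n`. The conformal p-value is the rank of the last coordinate divided by `N + 1`.
-/

open MeasureTheory Finset

section Rank

variable {ι α : Type*} [Fintype ι] [LinearOrder α]

def rankOf (v : ι → α) (k : ι) : ℕ := #{l | v l ≤ v k}

lemma rankOf_comp_perm (v : ι → α) (σ : Equiv.Perm ι) (k : ι) :
    rankOf (v ∘ σ) k = rankOf v (σ k) :=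
  card_equiv σ fun l => by simp

lemma rankOf_lt_rankOf {v : ι → α} {a b : ι} (h : v a < v b) : rankOf v a < rankOf v b := by
  refine card_lt_card ((ssubset_iff_of_subset fun l hl => ?_).mpr ⟨b, ?_, ?_⟩)
  · simp only [mem_filter, mem_univ, true_and] at hl ⊢
    exact hl.trans h.le
  · simp
  · simp [h]

lemma rankOf_injective {v : ι → α} (hv : Function.Injective v) : Function.Injective (rankOf v) := by
  intro a b hab
  by_contra hne
  rcases lt_or_gt_of_ne (hv.ne hne) with h | h
  · exact (rankOf_lt_rankOf h).ne hab
  · exact (rankOf_lt_rankOf h).ne' hab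

lemma rankOf_mem_Icc (v : ι → α) (k : ι) : rankOf v k ∈ Icc 1 (Fintype.card ι) :=
  mem_Icc.mpr ⟨card_pos.mpr ⟨k, by simp⟩, card_le_univ _⟩

lemma exists_rankOf_eq {v : ι → α} (hv : Function.Injective v) {m : ℕ}
    (hm : m ∈ Icc 1 (Fintype.card ι)) : ∃ k, rankOf v k = m := by
  have hsub : univ.image (rankOf v) ⊆ Icc 1 (Fintype.card ι) := by
    simpa [image_subset_iff] using rankOf_mem_Icc v
  have himage : univ.image (rankOf v) = Icc 1 (Fintype.card ι) :=
    eq_of_subset_of_card_le hsub (by simp [card_image_of_injective _ (rankOf_injective hv)])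
  simpa [← himage] using hm

lemma rankOf_last {N : ℕ} (v : Fin (N + 1) → α) :
    rankOf v (Fin.last N) = Nat.card {i : Fin N | v i.castSucc ≤ v (Fin.last N)} + 1 := by
  rw [rankOf, card_filter, Fin.sum_univ_castSucc, if_pos le_rfl, Nat.card_coe_set_eq,
    Set.ncard_eq_toFinset_card', Set.toFinset_ofPred, card_filter]

end Rank

section ExchangeableRank

variable {ι : Type*} [Fintype ι]

def rankEvent (k : ι) (m : ℕ) : Set (ι → ℝ) := {v | Function.Injective v ∧ rankOf v k = m}

lemma measurableSet_injective : MeasurableSet {v : ι → ℝ | Function.Injective v} := by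
  have h : {v : ι → ℝ | Function.Injective v} = ⋂ (a) (b) (_ : a ≠ b), {v | v a = v b}ᶜ := by
    ext v
    simp only [Set.mem_ofPred_eq, Set.mem_iInter, Set.mem_compl_iff]
    exact ⟨fun hv a b hab h => hab (hv h), fun hv a b h => by_contra fun hab => hv a b hab h⟩
  rw [h]
  exact .iInter fun a => .iInter fun b => .iInter fun _ =>
    (measurableSet_eq_fun (measurable_pi_apply a) (measurable_pi_apply b)).compl

lemma measurable_rankOf (k : ι) : Measurable fun v : ι → ℝ => rankOf v k := by
  simp only [rankOf, card_filter]
  exact Finset.measurable_sum _ fun l _ =>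
    Measurable.ite (measurableSet_le (measurable_pi_apply l) (measurable_pi_apply k))
      measurable_const measurable_const

lemma measurableSet_rankOf_eq (k : ι) (m : ℕ) : MeasurableSet {v : ι → ℝ | rankOf v k = m} :=
  measurable_rankOf k (measurableSet_singleton m)

lemma measurableSet_rankEvent (k : ι) (m : ℕ) : MeasurableSet (rankEvent k m) :=
  measurableSet_injective.inter (measurableSet_rankOf_eq k m)

lemma preimage_comp_perm_rankEvent (σ : Equiv.Perm ι) (k : ι) (m : ℕ) :
    (fun v : ι → ℝ => v ∘ σ) ⁻¹' rankEvent k m = rankEvent (σ k) m := by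
  ext v
  simp only [rankEvent, Set.mem_preimage, Set.mem_ofPred_eq, rankOf_comp_perm, σ.injective_comp]

lemma pairwise_disjoint_rankEvent (m : ℕ) :
    Pairwise (Function.onFun Disjoint fun k : ι => rankEvent k m) :=
  fun _ _ hab => Set.disjoint_left.mpr fun _ ⟨hv, ha⟩ ⟨_, hb⟩ =>
    hab (rankOf_injective hv (ha.trans hb.symm))

lemma iUnion_rankEvent {m : ℕ} (hm : m ∈ Icc 1 (Fintype.card ι)) :
    ⋃ k : ι, rankEvent k m = {v | Function.Injective v} := by
  ext v
  simp only [rankEvent, Set.mem_iUnion, Set.mem_ofPred_eq]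
  exact ⟨fun ⟨_, hv, _⟩ => hv, fun hv => (exists_rankOf_eq hv hm).imp fun _ hk => ⟨hv, hk⟩⟩

variable {μ : Measure (ι → ℝ)}

lemma measure_rankEvent_eq (hμ : ∀ σ : Equiv.Perm ι, μ.map (fun v => v ∘ σ) = μ)
    (k k' : ι) (m : ℕ) : μ (rankEvent k m) = μ (rankEvent k' m) := by
  classical
  have hσ : Measurable fun v : ι → ℝ => v ∘ Equiv.swap k' k := by fun_prop
  calc μ (rankEvent k m)
      = μ.map (fun v => v ∘ Equiv.swap k' k) (rankEvent k m) := by rw [hμ]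
    _ = μ (rankEvent k' m) := by
      rw [Measure.map_apply hσ (measurableSet_rankEvent k m), preimage_comp_perm_rankEvent,
        Equiv.swap_apply_right]

lemma card_mul_measure_rankEvent (hμ : ∀ σ : Equiv.Perm ι, μ.map (fun v => v ∘ σ) = μ)
    {m : ℕ} (hm : m ∈ Icc 1 (Fintype.card ι)) (k : ι) :
    Fintype.card ι * μ (rankEvent k m) = μ {v | Function.Injective v} := by
  rw [← iUnion_rankEvent hm, measure_iUnion (pairwise_disjoint_rankEvent m)
    (measurableSet_rankEvent · m), tsum_fintype,
    sum_congr rfl fun k' _ => measure_rankEvent_eq hμ k' k m,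
    sum_const, card_univ, nsmul_eq_mul]

lemma measure_rankOf_eq [IsProbabilityMeasure μ]
    (hμ : ∀ σ : Equiv.Perm ι, μ.map (fun v => v ∘ σ) = μ)
    (hinj : μ {v | Function.Injective v} = 1) {m : ℕ} (hm : m ∈ Icc 1 (Fintype.card ι)) (k : ι) :
    μ {v | rankOf v k = m} = (Fintype.card ι : ENNReal)⁻¹ := by
  have hae : {v : ι → ℝ | rankOf v k = m} =ᵐ[μ] rankEvent k m := by
    filter_upwards [(ae_iff_measure_eq measurableSet_injective.nullMeasurableSet).mpr
      (hinj.trans measure_univ.symm)] with v hv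
    exact propext ⟨fun h => ⟨hv, h⟩, And.right⟩
  rw [measure_congr hae]
  exact ENNReal.eq_inv_of_mul_eq_one_left (by rw [mul_comm, card_mul_measure_rankEvent hμ hm, hinj])

end ExchangeableRank

/-- Exact distribution of the conformal p-value under exchangeability without ties:
if `(s₁, …, s_N, s)` (coordinates of `X`, with `s = X (Fin.last N)`) are exchangeable
and almost surely all distinct, then
`p̂ = (|{i : s ≥ sᵢ}| + 1)/(N+1)` is uniform on `{1/(N+1), …, (N+1)/(N+1)}`:
each value `(j+1)/(N+1)` has probability exactly `1/(N+1)`. -/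
theorem conformal_pvalue_uniform {Ω : Type*} [MeasurableSpace Ω]
    (P : Measure Ω) [IsProbabilityMeasure P] (N : ℕ)
    (X : Ω → Fin (N + 1) → ℝ) (hX : Measurable X)
    (hexch : ∀ σ : Equiv.Perm (Fin (N + 1)),
      Measure.map (fun ω => X ω ∘ σ) P = Measure.map X P)
    (hties : P {ω | Function.Injective (X ω)} = 1)
    (j : Fin (N + 1)) :
    P {ω | ((Nat.card {i : Fin N | X ω i.castSucc ≤ X ω (Fin.last N)} : ℝ) + 1) / (N + 1)
        = ((j : ℝ) + 1) / (N + 1)}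
      = ENNReal.ofReal (1 / (N + 1)) := by
  have : IsProbabilityMeasure (P.map X) := Measure.isProbabilityMeasure_map hX.aemeasurable
  have hlaw_exch : ∀ σ : Equiv.Perm (Fin (N + 1)), (P.map X).map (fun v => v ∘ σ) = P.map X :=
    fun σ => by
      rw [Measure.map_map (by fun_prop) hX]
      exact hexch σ
  have hlaw_ties : P.map X {v | Function.Injective v} = 1 := by
    rwa [Measure.map_apply hX measurableSet_injective]
  have hpvalue : {ω | ((Nat.card {i : Fin N | X ω i.castSucc ≤ X ω (Fin.last N)} : ℝ) + 1) / (N + 1)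
      = ((j : ℝ) + 1) / (N + 1)} = X ⁻¹' {v | rankOf v (Fin.last N) = j + 1} := by
    ext ω
    simp only [Set.mem_preimage, Set.mem_ofPred_eq, rankOf_last,
      div_left_inj' (by positivity : (N : ℝ) + 1 ≠ 0)]
    exact_mod_cast Iff.rfl
  rw [hpvalue, ← Measure.map_apply hX (measurableSet_rankOf_eq _ _),
    measure_rankOf_eq hlaw_exch hlaw_ties (by simp [Nat.succ_le_of_lt j.isLt]), Fintype.card_fin,
    one_div, ENNReal.ofReal_inv_of_pos (by positivity)]
  norm_cast
end

section
/- Let $\theta_1, \dots, \theta_N, \theta$ be i.i.d. from $\Pi$ on $\Theta$, let $A \subseteq \Theta$ be measurable with $\Pi(A) > 0$, and let $s : \Theta \to \mathbb{R}$ be measurable. Conditional on the event $\{\theta \in A\} \cap \{\text{at least one } \theta_i \in A\}$, let $m$ be the (random) number of calibration points in $A$ and define $\hat p_A(\theta) = (|\{i : \theta_i \in A,\ s(\theta) \ge s(\theta_i)\}| + 1)/(m+1)$ and $\mathcal{C}^A_{1-\alpha} = \{\vartheta \in A : \hat p_A(\vartheta) \ge \alpha\}$. Then $\mathbb{P}[\theta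 \in \mathcal{C}^A_{1-\alpha} \mid \theta \in A] \ge 1 - \alpha$. -/
/-!
Pool the test point with the calibration points into `N + 1` i.i.d. draws. Whether a draw is
covered depends only on its own value and on the pooled sample up to permutation, so by
exchangeability every draw is covered with the same probability. Among the draws that land in
`A`, the uncovered ones are those whose score rank is below `α` times their number, and a
maximal-score argument shows there are at most that many of them. Integrating this count
inequality gives `(N + 1) P(covered) ≥ (1 - α) (N + 1) Π(A)`.
-/

open MeasureTheory ProbabilityTheory Finset
open scoped ENNReal

namespace Finset

variable {ι β : Type*} [LinearOrder β] (T : Finset ι) (f : ι → β)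

-- All such elements score at most the top-scoring one among them, whose rank is below `c`.
theorem card_filter_rank_lt_le {c : ℝ} (hc : 0 ≤ c) :
    (#{j ∈ T | (#{i ∈ T | f i ≤ f j} : ℝ) < c} : ℝ) ≤ c := by
  set B := {j ∈ T | (#{i ∈ T | f i ≤ f j} : ℝ) < c}
  rcases B.eq_empty_or_nonempty with hB | hB
  · simpa [hB] using hc
  obtain ⟨j₀, hj₀, hmax⟩ := B.exists_max_image f hB
  have hsub : B ⊆ {i ∈ T | f i ≤ f j₀} :=
    fun j hj => mem_filter.2 ⟨(mem_filter.1 hj).1, hmax j hj⟩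
  calc (#B : ℝ) ≤ #{i ∈ T | f i ≤ f j₀} := by exact_mod_cast card_le_card hsub
    _ ≤ c := (mem_filter.1 hj₀).2.le

theorem one_sub_mul_card_le_card_filter_rank_ge {a : ℝ} (ha : 0 ≤ a) :
    (1 - a) * #T ≤ #{j ∈ T | a * #T ≤ #{i ∈ T | f i ≤ f j}} := by
  have hsplit := congrArg (Nat.cast : ℕ → ℝ)
    (card_filter_add_card_filter_not (s := T) fun j => a * #T ≤ (#{i ∈ T | f i ≤ f j} : ℝ))
  have hlow := card_filter_rank_lt_le T f (c := a * #T) (by positivity)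
  simp only [not_le, Nat.cast_add] at hsplit
  linarith

end Finset

theorem measurable_card_filter {X ι : Type*} [MeasurableSpace X] [Fintype ι]
    {p : ι → X → Prop} [∀ i x, Decidable (p i x)] (hp : ∀ i, MeasurableSet {x | p i x}) :
    Measurable fun x => #{i | p i x} := by
  simp_rw [card_filter]
  exact Finset.measurable_sum _ fun i _ => Measurable.ite (hp i) measurable_const measurable_const

section DoubleCounting

variable {X ι : Type*} [MeasurableSpace X] [Fintype ι] (μ : Measure X)

open Classical in
theorem lintegral_card_filter_mem {F : ι → Set X} (hF : ∀ j, MeasurableSet (F j)) :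
    ∫⁻ x, (#{j | x ∈ F j} : ℝ≥0∞) ∂μ = ∑ j, μ (F j) := by
  have hcard : ∀ x, (#{j | x ∈ F j} : ℝ≥0∞) = ∑ j, (F j).indicator 1 x := fun x => by
    simp [Set.indicator_apply]
  simp_rw [hcard]
  rw [lintegral_finsetSum _ fun j _ => measurable_one.indicator (hF j)]
  simp_rw [lintegral_indicator_one (hF _)]

open Classical in
theorem const_mul_sum_measure_le_of_card_le (c : ℝ≥0∞) {F G : ι → Set X}
    (hF : ∀ j, MeasurableSet (F j)) (hG : ∀ j, MeasurableSet (G j))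
    (h : ∀ x, c * #{j | x ∈ F j} ≤ #{j | x ∈ G j}) :
    c * ∑ j, μ (F j) ≤ ∑ j, μ (G j) := by
  rw [← lintegral_card_filter_mem μ hF, ← lintegral_card_filter_mem μ hG]
  exact (lintegral_const_mul_le c _).trans (lintegral_mono h)

end DoubleCounting

theorem measure_pi_setOf_apply_mem_eq {Θ ι : Type*} [MeasurableSpace Θ] [Fintype ι]
    [DecidableEq ι] (P : Measure Θ) [SigmaFinite P]
    (Φ : (ι → Θ) → Set Θ) (hΦ : ∀ (σ : Equiv.Perm ι) x, Φ (x ∘ σ) = Φ x) (i j : ι) :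
    Measure.pi (fun _ => P) {x | x i ∈ Φ x} = Measure.pi (fun _ => P) {x | x j ∈ Φ x} := by
  let e := MeasurableEquiv.arrowCongr' (Equiv.swap i j) (MeasurableEquiv.refl Θ)
  have he : MeasurePreserving e (Measure.pi fun _ => P) (Measure.pi fun _ => P) :=
    measurePreserving_arrowCongr' _ _ _ _ fun _ => MeasurePreserving.id P
  have hpre : e ⁻¹' {x | x j ∈ Φ x} = {x | x i ∈ Φ x} := by
    ext x
    have hx : e x = x ∘ Equiv.swap i j := rfl
    simp [hx, hΦ]
  rw [← hpre, he.measure_preimage_equiv]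

section PooledConformal

variable {Θ ι : Type*} [Fintype ι]

/- For `θ = x j`, membership says `p̂_A(θ) ≥ α` for the calibration sample `x` without its
`j`-th entry: both counts include `j` itself, which accounts for the two `+ 1`s of `p̂_A`. -/
open Classical in
def pooledConformalSet (A : Set Θ) (s : Θ → ℝ) (α : ℝ) (x : ι → Θ) : Set Θ :=
  {θ | θ ∈ A ∧ α * #{i | x i ∈ A} ≤ #{i | x i ∈ A ∧ s (x i) ≤ s θ}}

variable {A : Set Θ} {s : Θ → ℝ} {α : ℝ}

open Classical in
theorem pooledConformalSet_comp_perm (σ : Equiv.Perm ι) (x : ι → Θ) :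
    pooledConformalSet A s α (x ∘ σ) = pooledConformalSet A s α x := by
  have hcard : ∀ (p : ι → Prop) [DecidablePred p], #{i | p (σ i)} = #{i | p i} := fun p _ =>
    card_equiv σ (by simp)
  ext θ
  simp only [pooledConformalSet, Set.mem_ofPred_eq, Function.comp_apply]
  rw [hcard (x · ∈ A), hcard fun i => x i ∈ A ∧ s (x i) ≤ s θ]

open Classical in
theorem one_sub_mul_card_le_card_apply_mem_pooledConformalSet (hα : 0 ≤ α) (x : ι → Θ) :
    (1 - α) * #{i | x i ∈ A} ≤ #{i | x i ∈ pooledConformalSet A s α x} := by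
  have h := (univ.filter (x · ∈ A)).one_sub_mul_card_le_card_filter_rank_ge (s ∘ x) hα
  simp only [filter_filter, Function.comp_apply] at h
  convert h using 4
  rfl

open Classical in
theorem apply_zero_mem_pooledConformalSet_iff {N : ℕ} (x : Fin (N + 1) → Θ) :
    x 0 ∈ pooledConformalSet A s α x ↔ x 0 ∈ A ∧
      α ≤ ((#{i : Fin N | x i.succ ∈ A ∧ s (x i.succ) ≤ s (x 0)} : ℝ) + 1)
        / (#{i : Fin N | x i.succ ∈ A} + 1) := by
  simp only [pooledConformalSet, Set.mem_ofPred_eq]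
  refine and_congr_right fun h0 => ?_
  rw [Fin.card_filter_univ_succ, Fin.card_filter_univ_succ, if_pos h0, if_pos ⟨h0, le_rfl⟩,
    le_div_iff₀ (by positivity)]
  push_cast
  rfl

variable [MeasurableSpace Θ]

theorem measurableSet_setOf_apply_mem_pooledConformalSet (hA : MeasurableSet A)
    (hs : Measurable s) (j : ι) :
    MeasurableSet {x : ι → Θ | x j ∈ pooledConformalSet A s α x} := by
  have hmem : ∀ i, Measurable fun x : ι → Θ => x i := measurable_pi_apply
  classical
  simp only [pooledConformalSet, Set.ofPred_and]
  refine (hmem j hA).inter (measurableSet_le ?_ ?_)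
  · exact measurable_const.mul <| measurable_from_nat.comp <|
      measurable_card_filter (p := fun i (x : ι → Θ) => x i ∈ A) fun i => hmem i hA
  · exact measurable_from_nat.comp <|
      measurable_card_filter (p := fun i (x : ι → Θ) => x i ∈ A ∧ s (x i) ≤ s (x j)) fun i =>
        (hmem i hA).inter (measurableSet_le (hs.comp (hmem i)) (hs.comp (hmem j)))

theorem ofReal_one_sub_mul_le_measure_pi_apply_mem_pooledConformalSet [DecidableEq ι]
    (P : Measure Θ) [IsProbabilityMeasure P] (hA : MeasurableSet A) (hs : Measurable s)
    (hα : 0 ≤ α) (j : ι) :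
    ENNReal.ofReal (1 - α) * P A ≤
      Measure.pi (fun _ => P) {x | x j ∈ pooledConformalSet A s α x} := by
  classical
  set ν := Measure.pi fun _ : ι => P
  have hmem : ∀ i, MeasurableSet {x : ι → Θ | x i ∈ A} := fun i => measurable_pi_apply i hA
  have hcount := const_mul_sum_measure_le_of_card_le ν (ENNReal.ofReal (1 - α)) hmem
    (measurableSet_setOf_apply_mem_pooledConformalSet (α := α) hA hs) fun x => by
      have h := one_sub_mul_card_le_card_apply_mem_pooledConformalSet (s := s) (A := A) hα x
      rw [← ENNReal.ofReal_natCast, ← ENNReal.ofReal_natCast,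
        ← ENNReal.ofReal_mul' (Nat.cast_nonneg _)]
      exact ENNReal.ofReal_le_ofReal h
  have hexch : ∀ i, ν {x | x i ∈ pooledConformalSet A s α x}
      = ν {x | x j ∈ pooledConformalSet A s α x} :=
    fun i => measure_pi_setOf_apply_mem_eq P _ pooledConformalSet_comp_perm i j
  have hmarg : ∀ i, ν {x | x i ∈ A} = P A := fun i =>
    (measurePreserving_eval (fun _ => P) i).measure_preimage hA.nullMeasurableSet
  simp only [hexch, hmarg, sum_const, card_univ, nsmul_eq_mul,
    mul_left_comm _ (Fintype.card ι : ℝ≥0∞)] at hcount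
  exact (ENNReal.mul_le_mul_iff_right (by simpa using (Fintype.card_pos_iff.2 ⟨j⟩).ne')
    (by simp)).1 hcount

end PooledConformal

theorem conditional_conformal_coverage_general {Θ : Type*} [MeasurableSpace Θ]
    (Pr : Measure Θ) [IsProbabilityMeasure Pr]
    (N : ℕ) (A : Set Θ) (hA : MeasurableSet A) (hApos : 0 < Pr A)
    (s : Θ → ℝ) (hs : Measurable s) (α : ℝ) (hα : α ∈ Set.Ioo (0 : ℝ) 1) :
    ENNReal.ofReal (1 - α) ≤
      ((Measure.pi fun _ : Fin N => Pr).prod Pr)[|{p : (Fin N → Θ) × Θ | p.2 ∈ A}]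
        {p : (Fin N → Θ) × Θ | p.2 ∈ A ∧
          α ≤ ((Nat.card {i : Fin N | p.1 i ∈ A ∧ s (p.1 i) ≤ s p.2} : ℝ) + 1)
              / ((Nat.card {i : Fin N | p.1 i ∈ A} : ℝ) + 1)} := by
  classical
  let e := (MeasurableEquiv.piFinSuccAbove (fun _ : Fin (N + 1) => Θ) 0).trans
    MeasurableEquiv.prodComm
  have he : MeasurePreserving e (Measure.pi fun _ => Pr)
      ((Measure.pi fun _ : Fin N => Pr).prod Pr) :=
    Measure.measurePreserving_swap.comp (measurePreserving_piFinSuccAbove (fun _ => Pr) 0)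
  have hB : MeasurableSet {p : (Fin N → Θ) × Θ | p.2 ∈ A} := measurable_snd hA
  have hμB : ((Measure.pi fun _ : Fin N => Pr).prod Pr) {p | p.2 ∈ A} = Pr A := by
    rw [show {p : (Fin N → Θ) × Θ | p.2 ∈ A} = Set.univ ×ˢ A by ext; simp, Measure.prod_prod,
      measure_univ, one_mul]
  rw [cond_apply hB, Set.inter_eq_self_of_subset_right fun p hp => hp.1,
    hμB, ← he.measure_preimage_equiv, ← ENNReal.div_eq_inv_mul,
    ENNReal.le_div_iff_mul_le (Or.inl hApos.ne') (Or.inl (measure_ne_top _ _))]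
  convert ofReal_one_sub_mul_le_measure_pi_apply_mem_pooledConformalSet Pr hA hs hα.1.le
    (0 : Fin (N + 1)) using 3
  ext x
  simp [e, MeasurableEquiv.prodComm, Fin.tail, apply_zero_mem_pooledConformalSet_iff]

/-- Conditional (restricted) conformal inference: with `θ₁, …, θ_N, θ` i.i.d. from
`Pr` (encoded as the product measure on `(Fin N → Θ) × Θ`), a measurable set `A`
of positive mass, `m` the number of calibration points in `A`, and
`p̂_A(θ) = (|{i : θᵢ ∈ A, s(θ) ≥ s(θᵢ)}| + 1)/(m + 1)`, conditionally on
`θ ∈ A` the new draw lies in `C^A_{1-α} = {ϑ ∈ A : p̂_A(ϑ) ≥ α}` with probability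
at least `1 - α`. -/
theorem conditional_conformal_coverage {Θ : Type*} [MeasurableSpace Θ]
    (Pr : Measure Θ) [IsProbabilityMeasure Pr]
    (N : ℕ) (hN : 1 ≤ N) (A : Set Θ) (hA : MeasurableSet A) (hApos : 0 < Pr A)
    (s : Θ → ℝ) (hs : Measurable s) (α : ℝ) (hα : α ∈ Set.Ioo (0 : ℝ) 1) :
    ENNReal.ofReal (1 - α) ≤
      ((Measure.pi fun _ : Fin N => Pr).prod Pr)[|{p : (Fin N → Θ) × Θ | p.2 ∈ A}]
        {p : (Fin N → Θ) × Θ | p.2 ∈ A ∧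
          α ≤ ((Nat.card {i : Fin N | p.1 i ∈ A ∧ s (p.1 i) ≤ s p.2} : ℝ) + 1)
              / ((Nat.card {i : Fin N | p.1 i ∈ A} : ℝ) + 1)} :=
  conditional_conformal_coverage_general Pr N A hA hApos s hs α hα
end
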